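/- arXiv:cs/0209018 — 2 statements merged into one kernel-verified Lean document; each statement's English description precedes it below -/
import Mathlib

section
/- If a language L ⊆ Σ* is recognized by some PRA-C with some interval (p₁,p₂), then for every ε > 0 there exists a PRA-C which recognizes L with interval (ε₁, 1−ε₂) for some ε₁, ε₂ ≤ ε. -/
/-- A real square matrix is doubly stochastic if all entries are nonnegative and
every row and every column sums to 1. -/
def DoublyStochastic {n : ℕ} (A : Matrix (Fin n) (Fin n) ℝ) : Prop :=
  (∀ i j, 0 ≤ A i j) ∧ (∀ i, ∑ j, A i j = 1) ∧ (∀ j, ∑ i, A i j = 1)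

/-- A 1-way probabilistic reversible C-automaton (PRA-C) over input alphabet `α`:
a finite state set `Fin n`, an initial state, a set of accepting states, and
a doubly stochastic matrix for each symbol of the working alphabet
(the letters of `α` together with the end-markers `#` and `$`). -/
structure PRAC (α : Type) where
  n : ℕ
  q0 : Fin n
  F : Finset (Fin n)
  V : α → Matrix (Fin n) (Fin n) ℝ
  Vhash : Matrix (Fin n) (Fin n) ℝ
  Vdollar : Matrix (Fin n) (Fin n) ℝ
  ds : ∀ a, DoublyStochastic (V a)
  ds_hash : DoublyStochastic Vhash
  ds_dollar : DoublyStochastic Vdollar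

namespace PRAC

variable {α : Type}

/-- Acceptance probability of a word `w = σ₁…σ_k`: the total mass on accepting states of
`V_$ ⬝ V_{σ_k} ⬝ ⋯ ⬝ V_{σ₁} ⬝ V_# ⬝ e_{q₀}`. -/
def accProb (A : PRAC α) (w : List α) : ℝ :=
  ∑ q ∈ A.F,
    (A.Vdollar.mulVec
      (w.foldl (fun v a => (A.V a).mulVec v) (A.Vhash.mulVec (Pi.single A.q0 1)))) q

/-- Recognition of a language with interval `(p₁, p₂)`. -/
def Recognizes (A : PRAC α) (L : Set (List α)) (p1 p2 : ℝ) : Prop :=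
  0 ≤ p1 ∧ p1 < p2 ∧ p2 ≤ 1 ∧
  (∀ w ∈ L, p2 ≤ A.accProb w) ∧ (∀ w ∉ L, A.accProb w ≤ p1)

/-- Recognition with probability `p`, i.e. with interval `(1 - p, p)`. -/
def RecognizesWithProb (A : PRAC α) (L : Set (List α)) (p : ℝ) : Prop :=
  A.Recognizes L (1 - p) p

end PRAC


/-!
Run `k` independent copies of the automaton in parallel: the state space is `Fin n ^ k`, each
transition matrix is the `k`-fold tensor power of the original one (again doubly stochastic), and
the new automaton accepts when at least `θ k` copies accept, `θ = (p₁ + p₂) / 2`. If a single copy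
accepts `w` with probability `p`, the distribution after reading `w` is the product distribution,
under which the number of accepting copies has mean `k p` and variance at most `k`. As
`|p - θ| ≥ δ = (p₂ - p₁) / 2`, Chebyshev's inequality bounds the error probability by `1 / (k δ²)`.
-/

open Finset
open scoped Matrix

section TensorPower

variable {ι κ R : Type*} [Fintype ι] [CommSemiring R]

def Pi.tensorPow (v : κ → R) (f : ι → κ) : R := ∏ t, v (f t)

def Matrix.tensorPow (M : Matrix κ κ R) : Matrix (ι → κ) (ι → κ) R :=
  fun f g => ∏ t, M (f t) (g t)

theorem Matrix.tensorPow_mulVec [DecidableEq ι] [Fintype κ] (M : Matrix κ κ R) (v : κ → R) :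
    M.tensorPow *ᵥ Pi.tensorPow v = Pi.tensorPow (ι := ι) (M *ᵥ v) := by
  funext f
  simp only [Matrix.mulVec, dotProduct, Matrix.tensorPow, Pi.tensorPow, ← prod_mul_distrib]
  exact (Fintype.prod_sum fun t q => M (f t) q * v q).symm

theorem Pi.tensorPow_single [DecidableEq κ] (q : κ) :
    Pi.tensorPow (Pi.single q 1 : κ → R) = Pi.single (fun _ : ι => q) 1 := by
  funext f
  simp [Pi.tensorPow, Pi.single_apply, prod_boole, funext_iff]

theorem sum_tensorPow_mul_prod [DecidableEq ι] [Fintype κ] {v : κ → R} (hv : ∑ q, v q = 1)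
    (T : Finset ι) (c : κ → R) :
    ∑ f : ι → κ, Pi.tensorPow v f * ∏ t ∈ T, c (f t) = (∑ q, v q * c q) ^ #T := by
  have split (f : ι → κ) : Pi.tensorPow v f * ∏ t ∈ T, c (f t)
      = ∏ t, v (f t) * (if t ∈ T then c (f t) else 1) := by
    rw [prod_mul_distrib, prod_ite_mem, univ_inter]
    rfl
  simp_rw [split]
  rw [← Fintype.prod_sum fun t q => v q * if t ∈ T then c q else 1]
  simp [mul_ite, hv, prod_ite_mem]

theorem sum_tensorPow_mul_sum_sq [DecidableEq ι] [Fintype κ] {v c : κ → R} (hv : ∑ q, v q = 1)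
    (hc : ∑ q, v q * c q = 0) :
    ∑ f : ι → κ, Pi.tensorPow v f * (∑ t, c (f t)) ^ 2 = Fintype.card ι * ∑ q, v q * c q ^ 2 := by
  have pair (t t' : ι) : ∑ f : ι → κ, Pi.tensorPow v f * (c (f t) * c (f t'))
      = if t = t' then ∑ q, v q * c q ^ 2 else 0 := by
    split_ifs with h
    · subst h
      simp_rw [← sq]
      simpa using sum_tensorPow_mul_prod hv {t} (fun q => c q ^ 2)
    · simpa [prod_pair h, hc] using sum_tensorPow_mul_prod hv {t, t'} c
  calc ∑ f : ι → κ, Pi.tensorPow v f * (∑ t, c (f t)) ^ 2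
      = ∑ t, ∑ t', ∑ f : ι → κ, Pi.tensorPow v f * (c (f t) * c (f t')) := by
        simp_rw [sq, sum_mul_sum, mul_sum]
        rw [sum_comm]
        simp_rw [sum_comm (γ := ι → κ)]
    _ = Fintype.card ι * ∑ q, v q * c q ^ 2 := by simp [pair]

theorem Pi.tensorPow_nonneg [PartialOrder R] [IsOrderedRing R]
    {v : κ → R} (hv : ∀ q, 0 ≤ v q) (f : ι → κ) : 0 ≤ Pi.tensorPow v f :=
  prod_nonneg fun t _ => hv (f t)

theorem sum_tensorPow [DecidableEq ι] [Fintype κ] {v : κ → R} (hv : ∑ q, v q = 1) :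
    ∑ f : ι → κ, Pi.tensorPow v f = 1 := by
  simpa using sum_tensorPow_mul_prod (ι := ι) hv ∅ v

theorem Matrix.tensorPow_mem_doublyStochastic [PartialOrder R] [IsOrderedRing R] [DecidableEq ι]
    [Fintype κ] [DecidableEq κ] {M : Matrix κ κ R}
    (hM : M ∈ doublyStochastic R κ) : M.tensorPow (ι := ι) ∈ doublyStochastic R (ι → κ) := by
  rw [mem_doublyStochastic_iff_sum] at hM ⊢
  obtain ⟨nonneg, rows, cols⟩ := hM
  refine ⟨fun f g => prod_nonneg fun t _ => nonneg _ _, fun f => ?_, fun g => ?_⟩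
  · simp [Matrix.tensorPow, ← Fintype.prod_sum fun t q => M (f t) q, rows]
  · simp [Matrix.tensorPow, ← Fintype.prod_sum fun t q => M q (g t), cols]

end TensorPower

theorem Matrix.mulVec_mem_stdSimplex {R n : Type*} [CommSemiring R] [PartialOrder R]
    [IsOrderedRing R] [Fintype n] [DecidableEq n] {M : Matrix n n R} {x : n → R}
    (hM : M ∈ doublyStochastic R n) (hx : x ∈ stdSimplex R n) : M *ᵥ x ∈ stdSimplex R n :=
  ⟨fun _ => sum_nonneg fun j _ => mul_nonneg (nonneg_of_mem_doublyStochastic hM) (hx.1 j),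
    (sum_mulVec_of_mem_doublyStochastic hM).trans hx.2⟩

theorem Finset.sum_filter_le_abs_le_sum_mul_sq_div {β : Type*} (s : Finset β) {w Y : β → ℝ}
    (hw : ∀ x ∈ s, 0 ≤ w x) {a : ℝ} (ha : 0 < a) :
    ∑ x ∈ s with a ≤ |Y x|, w x ≤ (∑ x ∈ s, w x * Y x ^ 2) / a ^ 2 := by
  rw [le_div_iff₀ (by positivity), sum_mul]
  calc ∑ x ∈ s with a ≤ |Y x|, w x * a ^ 2
      ≤ ∑ x ∈ s with a ≤ |Y x|, w x * Y x ^ 2 := by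
        refine sum_le_sum fun x hx => ?_
        obtain ⟨hxs, hax⟩ := mem_filter.1 hx
        have : a ^ 2 ≤ Y x ^ 2 := by simpa using pow_le_pow_left₀ ha.le hax 2
        exact mul_le_mul_of_nonneg_left this (hw x hxs)
    _ ≤ ∑ x ∈ s, w x * Y x ^ 2 :=
        sum_le_sum_of_subset_of_nonneg (filter_subset _ _)
          fun x hx _ => mul_nonneg (hw x hx) (sq_nonneg _)

theorem sum_tensorPow_filter_le_abs_sub_le {ι κ : Type*} [Fintype ι] [DecidableEq ι] [Fintype κ]
    [DecidableEq κ] {v : κ → ℝ} (hv : v ∈ stdSimplex ℝ κ) (S : Finset κ) {a : ℝ} (ha : 0 < a) :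
    ∑ f : ι → κ with a ≤ |(#{t | f t ∈ S} : ℝ) - Fintype.card ι * ∑ q ∈ S, v q|,
      Pi.tensorPow v f ≤ Fintype.card ι / a ^ 2 := by
  set p := ∑ q ∈ S, v q
  set c : κ → ℝ := fun q => (if q ∈ S then 1 else 0) - p
  have hp0 : 0 ≤ p := sum_nonneg fun q _ => hv.1 q
  have hp1 : p ≤ 1 :=
    hv.2 ▸ sum_le_sum_of_subset_of_nonneg (subset_univ S) fun q _ _ => hv.1 q
  have hc : ∑ q, v q * c q = 0 := by simp [c, mul_sub, sum_sub_distrib, ← sum_mul, hv.2, p]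
  -- the exact value is `p (1 - p)`, but this crude bound suffices
  have hc2 : ∑ q, v q * c q ^ 2 ≤ 1 := by
    have (q : κ) : c q ^ 2 ≤ 1 := by simp only [c]; split_ifs <;> nlinarith
    calc ∑ q, v q * c q ^ 2 ≤ ∑ q, v q * 1 := by gcongr with q; exact hv.1 q; exact this q
      _ = 1 := by simpa using hv.2
  have hdev (f : ι → κ) : (#{t | f t ∈ S} : ℝ) - Fintype.card ι * p = ∑ t, c (f t) := by
    simp [c, sum_sub_distrib]
  calc ∑ f : ι → κ with a ≤ |(#{t | f t ∈ S} : ℝ) - Fintype.card ι * p|, Pi.tensorPow v f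
      = ∑ f : ι → κ with a ≤ |∑ t, c (f t)|, Pi.tensorPow v f := by simp_rw [hdev]
    _ ≤ (∑ f : ι → κ, Pi.tensorPow v f * (∑ t, c (f t)) ^ 2) / a ^ 2 :=
        sum_filter_le_abs_le_sum_mul_sq_div _ (fun f _ => Pi.tensorPow_nonneg hv.1 f) ha
    _ = (Fintype.card ι * ∑ q, v q * c q ^ 2) / a ^ 2 := by
        rw [sum_tensorPow_mul_sum_sq hv.2 hc]
    _ ≤ Fintype.card ι / a ^ 2 := by
        gcongr; exact mul_le_of_le_one_right (by positivity) hc2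

theorem doublyStochastic_iff_mem {n : ℕ} {M : Matrix (Fin n) (Fin n) ℝ} :
    DoublyStochastic M ↔ M ∈ doublyStochastic ℝ (Fin n) :=
  mem_doublyStochastic_iff_sum.symm

theorem Matrix.reindex_tensorPow_mulVec {ι κ m R : Type*} [Fintype ι] [DecidableEq ι]
    [Fintype κ] [Fintype m] [CommSemiring R] (M : Matrix κ κ R) (u : κ → R)
    (e : (ι → κ) ≃ m) :
    M.tensorPow.reindex e e *ᵥ (Pi.tensorPow u ∘ e.symm) = Pi.tensorPow (M *ᵥ u) ∘ e.symm := by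
  rw [reindex_apply, submatrix_mulVec_equiv, Equiv.symm_symm, Function.comp_assoc,
    e.symm_comp_self, Function.comp_id, tensorPow_mulVec]

namespace PRAC

variable {α : Type} (A : PRAC α)

def finalDist (w : List α) : Fin A.n → ℝ :=
  A.Vdollar *ᵥ w.foldl (fun v a => A.V a *ᵥ v) (A.Vhash *ᵥ Pi.single A.q0 1)

theorem accProb_eq_sum_finalDist (w : List α) : A.accProb w = ∑ q ∈ A.F, A.finalDist w q := rfl

theorem finalDist_mem_stdSimplex (w : List α) : A.finalDist w ∈ stdSimplex ℝ (Fin A.n) := by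
  have step {u : Fin A.n → ℝ} {M : Matrix (Fin A.n) (Fin A.n) ℝ} (hM : DoublyStochastic M)
      (hu : u ∈ stdSimplex ℝ (Fin A.n)) : M *ᵥ u ∈ stdSimplex ℝ (Fin A.n) :=
    Matrix.mulVec_mem_stdSimplex (doublyStochastic_iff_mem.1 hM) hu
  refine step A.ds_dollar ?_
  suffices ∀ u ∈ stdSimplex ℝ (Fin A.n), w.foldl (fun v a => A.V a *ᵥ v) u ∈ stdSimplex ℝ (Fin A.n)
    from this _ (step A.ds_hash (single_mem_stdSimplex ℝ A.q0))
  induction w with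
  | nil => exact fun u hu => hu
  | cons a w ih => exact fun u hu => ih _ (step (A.ds a) hu)

noncomputable def amplify (k : ℕ) (θ : ℝ) : PRAC α where
  n := A.n ^ k
  q0 := finFunctionFinEquiv fun _ => A.q0
  F := {i | θ * k ≤ #{t | finFunctionFinEquiv.symm i t ∈ A.F}}
  V a := (A.V a).tensorPow.reindex finFunctionFinEquiv finFunctionFinEquiv
  Vhash := A.Vhash.tensorPow.reindex finFunctionFinEquiv finFunctionFinEquiv
  Vdollar := A.Vdollar.tensorPow.reindex finFunctionFinEquiv finFunctionFinEquiv
  ds a := doublyStochastic_iff_mem.2 <| reindex_mem_doublyStochastic <|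
    Matrix.tensorPow_mem_doublyStochastic <| doublyStochastic_iff_mem.1 (A.ds a)
  ds_hash := doublyStochastic_iff_mem.2 <| reindex_mem_doublyStochastic <|
    Matrix.tensorPow_mem_doublyStochastic <| doublyStochastic_iff_mem.1 A.ds_hash
  ds_dollar := doublyStochastic_iff_mem.2 <| reindex_mem_doublyStochastic <|
    Matrix.tensorPow_mem_doublyStochastic <| doublyStochastic_iff_mem.1 A.ds_dollar

theorem finalDist_amplify (k : ℕ) (θ : ℝ) (w : List α) :
    (A.amplify k θ).finalDist w = Pi.tensorPow (A.finalDist w) ∘ finFunctionFinEquiv.symm := by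
  have init : (Pi.single (finFunctionFinEquiv fun _ => A.q0) 1 : Fin (A.n ^ k) → ℝ)
      = Pi.tensorPow (Pi.single A.q0 1) ∘ finFunctionFinEquiv.symm := by
    funext i
    simp [Pi.tensorPow_single, Pi.single_apply, Equiv.symm_apply_eq]
  show A.Vdollar.tensorPow.reindex finFunctionFinEquiv finFunctionFinEquiv *ᵥ
      w.foldl (fun v a => (A.V a).tensorPow.reindex finFunctionFinEquiv finFunctionFinEquiv *ᵥ v)
        (A.Vhash.tensorPow.reindex finFunctionFinEquiv finFunctionFinEquiv *ᵥ
          Pi.single (finFunctionFinEquiv fun _ => A.q0) 1) = _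
  rw [init, Matrix.reindex_tensorPow_mulVec,
    List.foldl_hom (fun u => Pi.tensorPow u ∘ finFunctionFinEquiv.symm)
      fun u a => Matrix.reindex_tensorPow_mulVec (A.V a) u _,
    Matrix.reindex_tensorPow_mulVec]
  rfl

theorem accProb_amplify (k : ℕ) (θ : ℝ) (w : List α) :
    (A.amplify k θ).accProb w
      = ∑ f : Fin k → Fin A.n with θ * k ≤ #{t | f t ∈ A.F}, Pi.tensorPow (A.finalDist w) f := by
  rw [accProb_eq_sum_finalDist, finalDist_amplify]
  refine sum_equiv finFunctionFinEquiv.symm ?_ fun i _ => rfl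
  intro i
  rw [mem_filter, and_iff_right (mem_univ _)]
  exact mem_filter.trans (and_iff_right (mem_univ _))

variable {A}

theorem sum_tensorPow_finalDist_filter_le (w : List α) {k : ℕ} (hk : 0 < k) {δ : ℝ} (hδ : 0 < δ)
    {P : (Fin k → Fin A.n) → Prop} [DecidablePred P]
    (hP : ∀ f, P f → k * δ ≤ |(#{t | f t ∈ A.F} : ℝ) - k * A.accProb w|) :
    ∑ f with P f, Pi.tensorPow (A.finalDist w) f ≤ 1 / (k * δ ^ 2) := by
  have hd := A.finalDist_mem_stdSimplex w
  calc ∑ f with P f, Pi.tensorPow (A.finalDist w) f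
      ≤ ∑ f : Fin k → Fin A.n with
          k * δ ≤ |(#{t | f t ∈ A.F} : ℝ) - Fintype.card (Fin k) * ∑ q ∈ A.F, A.finalDist w q|,
          Pi.tensorPow (A.finalDist w) f :=
        sum_le_sum_of_subset_of_nonneg
          (monotone_filter_right _ fun f _ hf => by simpa [accProb_eq_sum_finalDist] using hP f hf)
          fun f _ _ => Pi.tensorPow_nonneg hd.1 f
    _ ≤ Fintype.card (Fin k) / (k * δ) ^ 2 :=
        sum_tensorPow_filter_le_abs_sub_le hd A.F (by positivity)
    _ = 1 / (k * δ ^ 2) := by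
        rw [Fintype.card_fin]
        field_simp

theorem accProb_amplify_le {w : List α} {k : ℕ} (hk : 0 < k) {θ δ : ℝ} (hδ : 0 < δ)
    (hw : A.accProb w ≤ θ - δ) : (A.amplify k θ).accProb w ≤ 1 / (k * δ ^ 2) := by
  rw [accProb_amplify]
  refine sum_tensorPow_finalDist_filter_le w hk hδ fun f hf => le_abs.2 (Or.inl ?_)
  nlinarith [mul_le_mul_of_nonneg_left hw k.cast_nonneg]

theorem one_sub_le_accProb_amplify {w : List α} {k : ℕ} (hk : 0 < k) {θ δ : ℝ} (hδ : 0 < δ)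
    (hw : θ + δ ≤ A.accProb w) : 1 - 1 / (k * δ ^ 2) ≤ (A.amplify k θ).accProb w := by
  have total := sum_filter_add_sum_filter_not univ
    (fun f : Fin k → Fin A.n => θ * k ≤ #{t | f t ∈ A.F}) (Pi.tensorPow (A.finalDist w))
  rw [sum_tensorPow (A.finalDist_mem_stdSimplex w).2] at total
  have rejected := sum_tensorPow_finalDist_filter_le w hk hδ
    (P := fun f => ¬ θ * k ≤ #{t | f t ∈ A.F}) fun f hf => le_abs.2 (Or.inr ?_)
  · rw [accProb_amplify]
    linarith
  · nlinarith [mul_le_mul_of_nonneg_left hw k.cast_nonneg]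

end PRAC

/-- If a language is recognized by a PRA-C, then for every `ε > 0` it is recognized by some
PRA-C with interval `(ε₁, 1-ε₂)` where `ε₁, ε₂ ≤ ε`. -/
theorem prac_recognizes_one_minus_eps {α : Type} (L : Set (List α)) (A : PRAC α)
    (p1 p2 : ℝ) (h : A.Recognizes L p1 p2) :
    ∀ ε : ℝ, 0 < ε → ∃ (B : PRAC α) (ε1 ε2 : ℝ), ε1 ≤ ε ∧ ε2 ≤ ε ∧
      B.Recognizes L ε1 (1 - ε2) := by
  intro ε hε
  obtain ⟨-, hlt, -, hL, hnL⟩ := h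
  set δ := (p2 - p1) / 2 with hδ_def
  have hδ : 0 < δ := by linarith
  set η := min ε (1 / 3)
  have hη : 0 < η := lt_min hε (by norm_num)
  obtain ⟨k, hk⟩ := exists_nat_gt (1 / (η * δ ^ 2))
  have hk0 : 0 < k := by exact_mod_cast (by positivity : (0 : ℝ) < 1 / (η * δ ^ 2)).trans hk
  set r := 1 / (k * δ ^ 2)
  have hr0 : 0 < r := by positivity
  have hr : r < η := by
    rw [div_lt_iff₀ (by positivity)] at hk ⊢
    linarith [show (k : ℝ) * (η * δ ^ 2) = η * (k * δ ^ 2) by ring]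
  have hrε : r ≤ ε := hr.le.trans (min_le_left _ _)
  have hr3 : r < 1 / 3 := hr.trans_le (min_le_right _ _)
  refine ⟨A.amplify k ((p1 + p2) / 2), r, r, hrε, hrε, hr0.le, by linarith, by linarith,
    fun w hw => PRAC.one_sub_le_accProb_amplify hk0 hδ ?_,
    fun w hw => PRAC.accProb_amplify_le hk0 hδ ?_⟩
  · linarith [hL w hw]
  · linarith [hnL w hw]
end

section
/- Let A be an n×n doubly stochastic real matrix. Then there exists an integer k ≥ 1 such that for every index i, (A^k)_{i,i} > 0. -/
open Finset Matrix

theorem DoublyStochastic.mem_doublyStochastic {n : ℕ} {A : Matrix (Fin n) (Fin n) ℝ}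
    (hA : DoublyStochastic A) : A ∈ doublyStochastic ℝ (Fin n) :=
  mem_doublyStochastic_iff_sum.2 hA

theorem exists_perm_le_apply_of_mem_doublyStochastic {R n : Type*} [Field R] [LinearOrder R]
    [IsStrictOrderedRing R] [Fintype n] [DecidableEq n] {M : Matrix n n R}
    (hM : M ∈ doublyStochastic R n) :
    ∃ σ : Equiv.Perm n, ∃ c : R, 0 < c ∧ ∀ i, c ≤ M i (σ i) := by
  obtain ⟨w, hw_nonneg, hw_sum, rfl⟩ := exists_eq_sum_perm_of_mem_doublyStochastic hM
  obtain ⟨σ, -, hσ⟩ : ∃ σ ∈ univ, (0 : R) < w σ :=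
    exists_lt_of_sum_lt (by simp [hw_sum])
  refine ⟨σ, w σ, hσ, fun i => ?_⟩
  rw [Matrix.sum_apply]
  calc w σ = (w σ • σ.permMatrix R) i (σ i) := by simp [Equiv.toPEquiv_apply]
    _ ≤ ∑ τ, (w τ • τ.permMatrix R) i (σ i) :=
      single_le_sum (f := fun τ => (w τ • τ.permMatrix R) i (σ i))
        (fun τ _ => smul_nonneg (hw_nonneg τ)
          (nonneg_of_mem_doublyStochastic permMatrix_mem_doublyStochastic))
        (mem_univ σ)

theorem Matrix.pow_le_pow_apply_perm_pow {R n : Type*} [Semiring R] [PartialOrder R]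
    [IsOrderedRing R] [Fintype n] [DecidableEq n] {M : Matrix n n R} (hM : ∀ i j, 0 ≤ M i j)
    {σ : Equiv.Perm n} {c : R} (hc : 0 ≤ c) (hσ : ∀ i, c ≤ M i (σ i)) (k : ℕ) (i : n) :
    c ^ k ≤ (M ^ k) i ((σ ^ k) i) := by
  induction k with
  | zero => simp
  | succ k ih =>
    set j := (σ ^ k) i
    rw [pow_succ, pow_succ, mul_apply, pow_succ', Equiv.Perm.mul_apply]
    calc c ^ k * c ≤ (M ^ k) i j * M j (σ j) :=
          mul_le_mul ih (hσ j) hc (pow_apply_nonneg hM k i j)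
      _ ≤ ∑ t, (M ^ k) i t * M t (σ j) :=
          single_le_sum (f := fun t => (M ^ k) i t * M t (σ j))
            (fun t _ => mul_nonneg (pow_apply_nonneg hM k _ _) (hM _ _)) (mem_univ j)

/-- For a doubly stochastic matrix `A` there exists `k ≥ 1` such that all diagonal entries
of `Aᵏ` are positive. -/
theorem doublyStochastic_exists_pow_all_diag_pos (n : ℕ) (A : Matrix (Fin n) (Fin n) ℝ)
    (hA : DoublyStochastic A) :
    ∃ k : ℕ, 1 ≤ k ∧ ∀ i : Fin n, 0 < (A ^ k) i i := by
  obtain ⟨σ, c, hc, hσ⟩ := exists_perm_le_apply_of_mem_doublyStochastic hA.mem_doublyStochastic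
  refine ⟨orderOf σ, orderOf_pos σ, fun i => ?_⟩
  calc 0 < c ^ orderOf σ := pow_pos hc _
    _ ≤ (A ^ orderOf σ) i ((σ ^ orderOf σ) i) := pow_le_pow_apply_perm_pow hA.1 hc.le hσ _ i
    _ = (A ^ orderOf σ) i i := by rw [pow_orderOf_eq_one, Equiv.Perm.one_apply]
end
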